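/- Let f : ℝ → ℝ be given by f(x) = π⁻² Σ_{n=1}^∞ 2^{−3n} cos(2ⁿ π x). Then f ∈ C²(ℝ), and for every x ∈ ℝ, every a > 0, and every k > 2: liminf_{y→x} (f(y) − f(x) − f′(x)(y−x) − (½f″(x) − a)(y−x)²)/|y−x|^k = +∞. -/

import Mathlib

/-!
Differentiating the series term by term twice leaves coefficients `2^{-3n} (2ⁿπ)^j`, `j ≤ 2`,
which are summable, so `f` is `C²`. Taylor's theorem at order two then writes the numerator as
`a (y - x)² + o((y - x)²)`, and dividing by `|y - x|^k` with `k > 2` sends it to `+∞`.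
-/

open Filter Real

/-- `f(x) = π⁻² ∑_{n ≥ 1} 2^{-3n} cos(2ⁿ π x)`. -/
noncomputable def hardyF (x : ℝ) : ℝ :=
  π ⁻¹ ^ 2 * ∑' m : ℕ, 2 ^ (-(3 : ℤ) * (m + 1)) * Real.cos (2 ^ (m + 1) * π * x)

open Asymptotics Topology

theorem abs_iteratedDeriv_const_mul_cos_mul_le (n : ℕ) (b c x : ℝ) :
    |iteratedDeriv n (fun x => b * cos (c * x)) x| ≤ |b| * |c| ^ n := by
  rw [iteratedDeriv_const_mul_field, iteratedDeriv_comp_const_mul (contDiff_cos (n := n)),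
    abs_mul, abs_mul, abs_pow]
  gcongr
  exact mul_le_of_le_one_right (by positivity) (abs_iteratedDeriv_cos_le_one n _)

theorem contDiff_tsum_const_mul_cos_mul {N : ℕ} {b c : ℕ → ℝ}
    (hsum : ∀ j ≤ N, Summable fun m => |b m| * |c m| ^ j) :
    ContDiff ℝ N fun x => ∑' m, b m * cos (c m * x) := by
  refine contDiff_tsum (v := fun j m => |b m| * |c m| ^ j)
    (fun m => contDiff_const.mul (contDiff_cos.comp (contDiff_const.mul contDiff_id)))
    (fun j hj => hsum j (by exact_mod_cast hj)) fun j m x _ => ?_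
  rw [norm_iteratedFDeriv_eq_norm_iteratedDeriv, Real.norm_eq_abs]
  exact abs_iteratedDeriv_const_mul_cos_mul_le j (b m) (c m) x

theorem summable_hardyF_coeff {j : ℕ} (hj : j < 3) :
    Summable fun m : ℕ => |(2 : ℝ) ^ (-(3 : ℤ) * (m + 1))| * |2 ^ (m + 1) * π| ^ j := by
  have hq : (2 : ℝ) ^ j / 8 < 1 := by
    rw [div_lt_one (by norm_num)]
    calc (2 : ℝ) ^ j ≤ 2 ^ 2 := pow_le_pow_right₀ (by norm_num) (by omega)
      _ < 8 := by norm_num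
  refine ((summable_geometric_of_lt_one (by positivity) hq).mul_left
    (π ^ j * (2 ^ j / 8))).congr fun m => ?_
  rw [abs_of_pos (by positivity), abs_of_pos (by positivity), zpow_mul, zpow_neg,
    show (m : ℤ) + 1 = ((m + 1 : ℕ) : ℤ) by push_cast; ring, zpow_natCast]
  field_simp
  ring

theorem contDiff_hardyF : ContDiff ℝ 2 hardyF :=
  contDiff_const.mul <|
    contDiff_tsum_const_mul_cos_mul (N := 2) fun _ hj => summable_hardyF_coeff (by omega)

theorem isLittleO_taylor_two {f : ℝ → ℝ} (hf : ContDiff ℝ 2 f) (x : ℝ) :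
    (fun y => f y - f x - deriv f x * (y - x) - (1 / 2) * deriv (deriv f) x * (y - x) ^ 2)
      =o[𝓝 x] fun y => (y - x) ^ 2 := by
  refine (taylor_isLittleO_univ hf).congr_left fun y => ?_
  simp only [taylorWithinEval_succ, taylor_within_zero_eval, iteratedDerivWithin_univ,
    iteratedDeriv_succ, iteratedDeriv_zero, smul_eq_mul, Nat.factorial]
  push_cast
  ring

theorem tendsto_add_const_mul_pow_div_pow_atTop {R : ℝ → ℝ} {x a : ℝ} {n k : ℕ}
    (hR : R =o[𝓝 x] fun y => |y - x| ^ n) (ha : 0 < a) (hnk : n < k) :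
    Tendsto (fun y => (R y + a * |y - x| ^ n) / |y - x| ^ k) (𝓝[≠] x) atTop := by
  have hquot : Tendsto (fun y => R y / |y - x| ^ n + a) (𝓝[≠] x) (𝓝 a) := by
    simpa using ((hR.tendsto_div_nhds_zero).mono_left nhdsWithin_le_nhds).add_const a
  have hpow : Tendsto (fun y => |y - x| ^ (k - n)) (𝓝[≠] x) (𝓝[>] 0) := by
    refine tendsto_nhdsWithin_iff.mpr ⟨?_, ?_⟩
    · have : Continuous fun y => |y - x| ^ (k - n) := by fun_prop
      simpa [zero_pow (by omega : k - n ≠ 0)] using this.tendsto x |>.mono_left nhdsWithin_le_nhds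
    · filter_upwards [self_mem_nhdsWithin] with y hy
      exact pow_pos (abs_pos.mpr (sub_ne_zero.mpr hy)) _
  refine (hquot.pos_mul_atTop ha hpow.inv_tendsto_nhdsGT_zero).congr' ?_
  filter_upwards [self_mem_nhdsWithin] with y hyx
  have hy : |y - x| ≠ 0 := abs_ne_zero.mpr (sub_ne_zero.mpr hyx)
  rw [Pi.inv_apply, show k = (k - n) + n by omega, pow_add, Nat.add_sub_cancel]
  field_simp

theorem hardy_function_subexpansions :
    ContDiff ℝ 2 hardyF ∧
      ∀ x : ℝ, ∀ a : ℝ, 0 < a → ∀ k : ℕ, 2 < k →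
        Tendsto (fun y : ℝ =>
            (hardyF y - hardyF x - deriv hardyF x * (y - x) -
              ((1 / 2) * deriv (deriv hardyF) x - a) * (y - x) ^ 2) / |y - x| ^ k)
          (nhdsWithin x {x}ᶜ) atTop := by
  refine ⟨contDiff_hardyF, fun x a ha k hk => ?_⟩
  have hR := isLittleO_abs_right.mpr (isLittleO_taylor_two contDiff_hardyF x)
  simp only [abs_pow] at hR
  convert tendsto_add_const_mul_pow_div_pow_atTop hR ha hk using 2 with y
  rw [sq_abs]
  ring
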